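/- arXiv:1106.4801 — 4 statements merged into one kernel-verified Lean document; each statement's English description precedes it below -/
import Mathlib

section
/- Let T, X : ℝ³ → ℝ be smooth functions of (t,x,u) satisfying, for a fixed nowhere-zero function f of (x, u_x): T_u X_u = 0, T_u X_t + T_t X_u = 0, and T_t X_t = f·(T_x X_x + (T_u X_x + T_x X_u) u_x) for all values of u_x (treating u_x as an independent real parameter), together with T_u X_t = 0 and T_t X_u = 0. If the Jacobian of (T, X, U) with respect to (t,x,u) is nonzero (for some U with U_u ≠ 0), then T_u = 0 and X_u = 0. -/
/-! Swapping `T` and `X` preserves the split equations and only changes the sign of the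
Jacobian, so it suffices to rule out `T_u ≠ 0`. Then `X_u = X_t = 0`, the third equation
reads `0 = f · (T_x X_x + T_u X_x u_x)` for every `u_x`, and its `u_x`-coefficient gives
`X_x = 0`: the row of `X` in the Jacobian vanishes. -/

theorem eq_zero_and_eq_zero_of_forall_add_mul_eq_zero {R : Type*} [Semiring R] {c d : R}
    (h : ∀ s : R, c + d * s = 0) : c = 0 ∧ d = 0 := by
  have hc : c = 0 := by simpa using h 0
  exact ⟨hc, by simpa [hc] using h 1⟩

theorem Tu_eq_zero_of_split_equations
    {Tt Tx Tu Xt Xx Xu Ut Ux Uu : ℝ} {f : ℝ → ℝ}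
    (hf : ∀ s : ℝ, f s ≠ 0)
    (h1 : Tu * Xu = 0)
    (h3 : ∀ s : ℝ, Tt * Xt = f s * (Tx * Xx + (Tu * Xx + Tx * Xu) * s))
    (h4 : Tu * Xt = 0)
    (hJ : Tt * (Xx * Uu - Xu * Ux) - Tx * (Xt * Uu - Xu * Ut)
            + Tu * (Xt * Ux - Xx * Ut) ≠ 0) :
    Tu = 0 := by
  by_contra hTu
  have hXu : Xu = 0 := (mul_eq_zero.1 h1).resolve_left hTu
  have hXt : Xt = 0 := (mul_eq_zero.1 h4).resolve_left hTu
  have hlin : ∀ s : ℝ, Tx * Xx + Tu * Xx * s = 0 := fun s => by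
    have := h3 s
    rw [hXt, hXu, mul_zero, eq_comm, mul_eq_zero] at this
    simpa using this.resolve_left (hf s)
  have hXx : Xx = 0 :=
    (mul_eq_zero.1 (eq_zero_and_eq_zero_of_forall_add_mul_eq_zero hlin).2).resolve_left hTu
  exact hJ (by rw [hXt, hXx, hXu]; ring)

theorem admissible_transformation_fiber_preserving_general
    (Tt Tx Tu Xt Xx Xu Ut Ux Uu : ℝ) (f : ℝ → ℝ)
    (hf : ∀ s : ℝ, f s ≠ 0)
    (h1 : Tu * Xu = 0)
    (h3 : ∀ ux : ℝ, Tt * Xt = f ux * (Tx * Xx + (Tu * Xx + Tx * Xu) * ux))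
    (h4 : Tu * Xt = 0) (h5 : Tt * Xu = 0)
    (hJ : Tt * (Xx * Uu - Xu * Ux) - Tx * (Xt * Uu - Xu * Ut)
            + Tu * (Xt * Ux - Xx * Ut) ≠ 0) :
    Tu = 0 ∧ Xu = 0 := by
  refine ⟨Tu_eq_zero_of_split_equations hf h1 h3 h4 hJ, ?_⟩
  refine Tu_eq_zero_of_split_equations (Tt := Xt) (Tx := Xx) (Tu := Xu) (Xt := Tt) (Xx := Tx)
    (Xu := Tu) (Ut := Ut) (Ux := Ux) (Uu := Uu) hf (by rwa [mul_comm])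
    (fun s => by convert h3 s using 1 <;> ring) (by rwa [mul_comm]) ?_
  exact fun h => hJ (by linear_combination -h)

/-- Nondegeneracy of the point transformation (T,X,U), together with the split
determining equations for admissible transformations of u_tt = f(x,u_x)u_xx + g(x,u_x),
forces T_u = 0 and X_u = 0. All values are taken at a fixed point (t,x,u), and the
equations hold identically in the free parameter u_x. -/
theorem admissible_transformation_fiber_preserving
    (Tt Tx Tu Xt Xx Xu Ut Ux Uu : ℝ) (f : ℝ → ℝ)
    (hf : ∀ s : ℝ, f s ≠ 0)
    (h1 : Tu * Xu = 0)
    (h2 : Tu * Xt + Tt * Xu = 0)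
    (h3 : ∀ ux : ℝ, Tt * Xt = f ux * (Tx * Xx + (Tu * Xx + Tx * Xu) * ux))
    (h4 : Tu * Xt = 0) (h5 : Tt * Xu = 0)
    (hU : Uu ≠ 0)
    (hJ : Tt * (Xx * Uu - Xu * Ux) - Tx * (Xt * Uu - Xu * Ut)
            + Tu * (Xt * Ux - Xx * Ut) ≠ 0) :
    Tu = 0 ∧ Xu = 0 :=
  admissible_transformation_fiber_preserving_general Tt Tx Tu Xt Xx Xu Ut Ux Uu f hf h1 h3 h4 h5 hJ
end

section
/- Let m be the 5-dimensional Lie algebra with basis e₁,…,e₅ and nonzero brackets [e₄,e₅]=e₄, [e₄,e₂]=e₁, [e₄,e₃]=2e₂, [e₂,e₅]=e₂, [e₃,e₅]=2e₃ (and their antisymmetric counterparts). Suppose A is a Lie algebra automorphism of m whose matrix in this basis is upper triangular with diagonal entries a₁₁,…,a₅₅ all nonzero. Then a₅₅ = 1, the (3,4) entry a₃₄ = 0, the (2,4) entry satisfies a₂₄ = a₄₄·a₃₅, and the (1,4) entry satisfies a₁₄ = a₄₄·a₂₅ − a₄₅·a₂₄. Consequently the subspace spanned by {e₁, e₂, e₄}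 is invariant under every such automorphism. -/
/-!
Applying `A` to `[e₄, e₅] = e₄` gives `[Ae₄, Ae₅] = Ae₄`; since `Ae₄` has no `e₅`-component and a
nonzero `e₄`-component, the coordinates of this identity are exactly the four relations. With
`a₃₄ = 0` the columns `Ae₁, Ae₂, Ae₄` have no `e₃`- or `e₅`-component, so `A` maps `⟨e₁, e₂, e₄⟩`
into itself, and an injective map of a finite-dimensional subspace into itself is onto it.
-/

/-- The bracket of the 5-dimensional Lie algebra m with basis e₁=G(1), e₂=F¹, e₃=F²,
e₄=Pᵗ, e₅=Dᵗ (indexed 0,…,4), and nonzero brackets [e₄,e₅]=e₄, [e₄,e₂]=e₁,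
[e₄,e₃]=2e₂, [e₂,e₅]=e₂, [e₃,e₅]=2e₃ (in 1-based numbering). -/
def mBr (x y : Fin 5 → ℝ) : Fin 5 → ℝ :=
  ![x 3 * y 1 - x 1 * y 3,
    2 * (x 3 * y 2 - x 2 * y 3) + (x 4 * y 1 - x 1 * y 4),
    2 * (x 4 * y 2 - x 2 * y 4),
    x 3 * y 4 - x 4 * y 3,
    0]

noncomputable def mE (i : Fin 5) : Fin 5 → ℝ := Pi.single i 1

theorem Submodule.map_eq_self_of_injective_of_map_le {K V : Type*} [DivisionRing K]
    [AddCommGroup V] [Module K V] {f : V →ₗ[K] V} (hf : Function.Injective f)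
    {S : Submodule K V} [FiniteDimensional K S] (h : S.map f ≤ S) : S.map f = S :=
  Submodule.eq_of_le_of_finrank_eq h (Submodule.equivMapOfInjective f hf S).finrank_eq.symm

lemma sum_smul_mE (c : Fin 5 → ℝ) : ∑ i, c i • mE i = c := by
  simp only [mE, ← Pi.single_smul', smul_eq_mul, mul_one, Finset.univ_sum_single]

lemma mem_span_image_mE_iff {s : Set (Fin 5)} {x : Fin 5 → ℝ} :
    x ∈ Submodule.span ℝ (mE '' s) ↔ ∀ i ∉ s, x i = 0 := by
  have : mE = Pi.basisFun ℝ (Fin 5) := funext fun i => (Pi.basisFun_apply ℝ (Fin 5) i).symm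
  rw [this, Module.Basis.mem_span_image]
  simp [Set.subset_def, not_imp_comm]

lemma mBr_mE_three_four : mBr (mE 3) (mE 4) = mE 3 := by
  funext i; fin_cases i <;> simp [mBr, mE]

lemma coords_of_mBr_eq_left {u v : Fin 5 → ℝ} (hu4 : u 4 = 0) (hu3 : u 3 ≠ 0)
    (h : mBr u v = u) :
    v 4 = 1 ∧ u 2 = 0 ∧ u 1 = u 3 * v 2 ∧ u 0 = u 3 * v 1 - v 3 * u 1 := by
  have e0 : u 3 * v 1 - u 1 * v 3 = u 0 := congrFun h 0
  have e1 : 2 * (u 3 * v 2 - u 2 * v 3) + (u 4 * v 1 - u 1 * v 4) = u 1 := congrFun h 1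
  have e2 : 2 * (u 4 * v 2 - u 2 * v 4) = u 2 := congrFun h 2
  have e3 : u 3 * v 4 - u 4 * v 3 = u 3 := congrFun h 3
  have hv4 : v 4 = 1 := mul_left_cancel₀ hu3 (by rw [hu4] at e3; linarith)
  have hu2 : u 2 = 0 := by rw [hu4, hv4] at e2; linarith
  refine ⟨hv4, hu2, ?_, by linarith⟩
  rw [hu4, hv4, hu2] at e1
  linarith

/-- Constraints on an upper-triangular automorphism of m: a₅₅ = 1, a₃₄ = 0,
a₂₄ = a₄₄a₃₅, a₁₄ = a₄₄a₂₅ − a₄₅a₂₄ (1-based indices), and the subspace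
⟨e₁, e₂, e₄⟩ is invariant. -/
theorem upper_triangular_automorphism_constraints
    (A : (Fin 5 → ℝ) →ₗ[ℝ] (Fin 5 → ℝ))
    (hbij : Function.Bijective A)
    (hbr : ∀ x y : Fin 5 → ℝ, A (mBr x y) = mBr (A x) (A y))
    (a : Fin 5 → Fin 5 → ℝ)
    (hmat : ∀ j : Fin 5, A (mE j) = ∑ i : Fin 5, a i j • mE i)
    (htri : ∀ i j : Fin 5, (j : ℕ) < (i : ℕ) → a i j = 0)
    (hdiag : ∀ i : Fin 5, a i i ≠ 0) :
    a 4 4 = 1 ∧ a 2 3 = 0 ∧ a 1 3 = a 3 3 * a 2 4 ∧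
    a 0 3 = a 3 3 * a 1 4 - a 3 4 * a 1 3 ∧
    Submodule.map A (Submodule.span ℝ {mE 0, mE 1, mE 3})
      = Submodule.span ℝ {mE 0, mE 1, mE 3} := by
  have hcol : ∀ j, A (mE j) = fun i => a i j := fun j => (hmat j).trans (sum_smul_mE _)
  have hA34 : mBr (A (mE 3)) (A (mE 4)) = A (mE 3) := by rw [← hbr, mBr_mE_three_four]
  rw [hcol, hcol] at hA34
  obtain ⟨h44, h23, h13, h03⟩ := coords_of_mBr_eq_left (u := fun i => a i 3)
    (v := fun i => a i 4) (htri 4 3 (by decide)) (hdiag 3) hA34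
  refine ⟨h44, h23, h13, h03, ?_⟩
  have hS : ({mE 0, mE 1, mE 3} : Set (Fin 5 → ℝ)) = mE '' {0, 1, 3} := by
    simp [Set.image_insert_eq]
  rw [hS]
  refine Submodule.map_eq_self_of_injective_of_map_le hbij.1 ?_
  rw [Submodule.map_le_iff_le_comap, Submodule.span_le]
  rintro _ ⟨j, hj, rfl⟩
  rw [SetLike.mem_coe, Submodule.mem_comap, hcol, mem_span_image_mE_iff]
  intro i hi
  rcases hj with rfl | rfl | rfl <;> fin_cases i <;> simp at hi ⊢ <;>
    first | exact h23 | exact htri _ _ (by decide)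
end

section
/- Consider the Lie algebra V of vector fields on ℝ (i.e., smooth functions φ ↦ φ(x)∂_x with bracket [φ∂_x, ψ∂_x] = (φψ' − φ'ψ)∂_x). If ζ is a smooth function with ζ' not identically zero, and i is a Lie subalgebra of V containing ζ∂_x and closed under bracketing with all elements of V (an ideal of V), then defining R^{0k} = k^{-1}[ζ∂_x, ζ^{k+1}∂_x] and R^{jk} = k^{-1}[R^{j-1,1}, R^{j-1,k+1}], one has R^{j-1,k} = ζ^k(ζζ')^{2^j −1}∂_x for all j,k ≥ 1. -/
/-- The Lie bracket of vector fields φ∂ₓ, ψ∂ₓ on ℝ: [φ∂ₓ, ψ∂ₓ] = (φψ' − φ'ψ)∂ₓ. -/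
noncomputable def vfBr (φ ψ : ℝ → ℝ) : ℝ → ℝ :=
  fun x => φ x * deriv ψ x - deriv φ x * ψ x

/-- For a smooth ζ with ζ' not identically zero, and an ideal i of the Lie algebra of
vector fields on ℝ containing ζ∂ₓ, the iterated brackets
R⁰ᵏ = k⁻¹[ζ∂ₓ, ζ^{k+1}∂ₓ], Rʲᵏ = k⁻¹[Rʲ⁻¹,¹, Rʲ⁻¹,ᵏ⁺¹] satisfy
R^{j-1,k} = ζᵏ(ζζ')^{2ʲ−1}∂ₓ for all j, k ≥ 1. -/
theorem iterated_brackets_formula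
    (ζ : ℝ → ℝ) (hζ : ContDiff ℝ (⊤ : ℕ∞) ζ) (hζ' : ∃ x : ℝ, deriv ζ x ≠ 0)
    (i : Set (ℝ → ℝ)) (hζi : ζ ∈ i)
    (hideal : ∀ φ ∈ i, ∀ ψ : ℝ → ℝ, vfBr ψ φ ∈ i)
    (R : ℕ → ℕ → ℝ → ℝ)
    (hR0 : ∀ k : ℕ, R 0 k = fun x => (k : ℝ)⁻¹ * vfBr ζ (fun y => ζ y ^ (k + 1)) x)
    (hRs : ∀ j k : ℕ, R (j + 1) k = fun x => (k : ℝ)⁻¹ * vfBr (R j 1) (R j (k + 1)) x) :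
    ∀ j k : ℕ, 1 ≤ k →
      R j k = fun x => ζ x ^ k * (ζ x * deriv ζ x) ^ (2 ^ (j + 1) - 1) := by
  have hζd : Differentiable ℝ ζ := hζ.differentiable (by simp)
  have hζ2 : ContDiff ℝ ((⊤ : ℕ∞) : WithTop ℕ∞) ζ := hζ.of_le (by simp)
  have hdd : Differentiable ℝ (deriv ζ) :=
    ((contDiff_infty_iff_deriv.mp hζ2).2).differentiable (by simp)
  intro j
  induction j with
  | zero =>
    intro k hk
    have hk0 : (k : ℝ) ≠ 0 := Nat.cast_ne_zero.mpr (by omega)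
    rw [hR0]
    funext x
    have h1 : HasDerivAt ζ (deriv ζ x) x := (hζd x).hasDerivAt
    have hp := (h1.fun_pow (k + 1)).deriv
    simp only [vfBr, hp]
    push_cast
    simp only [pow_zero, pow_one, Nat.add_sub_cancel]
    field_simp
    ring
  | succ j ih =>
    intro k hk
    have hk0 : (k : ℝ) ≠ 0 := Nat.cast_ne_zero.mpr (by omega)
    have h2j : 1 ≤ 2 ^ j := Nat.one_le_two_pow
    obtain ⟨t, ht⟩ : ∃ t, 2 ^ (j + 1) - 1 = t + 1 := by
      refine ⟨2 ^ (j + 1) - 2, ?_⟩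
      rw [pow_succ]; omega
    have ht2 : 2 ^ (j + 1 + 1) - 1 = 2 * t + 3 := by
      rw [pow_succ, pow_succ] at *; omega
    rw [hRs, ih 1 le_rfl, ih (k + 1) (by omega)]
    simp only [ht, ht2]
    funext x
    have h1 : HasDerivAt ζ (deriv ζ x) x := (hζd x).hasDerivAt
    have h2 : HasDerivAt (deriv ζ) (deriv (deriv ζ) x) x := (hdd x).hasDerivAt
    have hw : HasDerivAt (fun y => ζ y * deriv ζ y)
        (deriv ζ x * deriv ζ x + ζ x * deriv (deriv ζ) x) x := h1.mul h2
    have e1 := ((h1.fun_pow 1).fun_mul (hw.fun_pow (t + 1))).deriv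
    have e2 := ((h1.fun_pow (k + 1)).fun_mul (hw.fun_pow (t + 1))).deriv
    simp only [vfBr]
    rw [e1, e2]
    simp only [Nat.add_sub_cancel, pow_zero, pow_one]
    push_cast
    field_simp
    ring
end

section
/- In the Lie algebra of vector fields on ℝ with D(φ) = φ(x)∂_x and bracket [D(φ¹), D(φ²)] = D(φ¹φ²ₓ − φ¹ₓφ²), the following holds: if ζ is a smooth nonconstant function, then the iterated brackets R^{jk} defined by R^{0k} = k^{-1}[D(ζ), D(ζ^{k+1})] and R^{jk} = k^{-1}[R^{j-1,1}, R^{j-1,k+1}] are all nonzero whenever ζζ_x is not identically zero; in particular, any ideal of this Lie algebra containing a D(ζ) with ζ nonconstant has nonvanishing derived series at every order, hence is not solvable. -/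
/-- The derived series of a subspace of vector fields on ℝ. -/
noncomputable def derSeries (i : Submodule ℝ (ℝ → ℝ)) : ℕ → Submodule ℝ (ℝ → ℝ)
  | 0 => i
  | (j + 1) =>
      Submodule.span ℝ
        {v | ∃ x ∈ derSeries i j, ∃ y ∈ derSeries i j, v = vfBr x y}

/-- If ζζ' is not identically zero, the iterated brackets Rʲᵏ are all nonzero; in
particular, any ideal of the Lie algebra of vector fields on ℝ containing ζ∂ₓ with ζ
nonconstant has nonvanishing derived series at every order, hence is not solvable. -/
theorem ideal_containing_nonconstant_vector_field_not_solvable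
    (ζ : ℝ → ℝ) (hζ : ContDiff ℝ (⊤ : ℕ∞) ζ)
    (R : ℕ → ℕ → ℝ → ℝ)
    (hR0 : ∀ k : ℕ, R 0 k = fun x => (k : ℝ)⁻¹ * vfBr ζ (fun y => ζ y ^ (k + 1)) x)
    (hRs : ∀ j k : ℕ, R (j + 1) k = fun x => (k : ℝ)⁻¹ * vfBr (R j 1) (R j (k + 1)) x) :
    ((∃ x : ℝ, ζ x * deriv ζ x ≠ 0) → ∀ j k : ℕ, 1 ≤ k → R j k ≠ 0) ∧
    (∀ i : Submodule ℝ (ℝ → ℝ),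
      (∀ φ ∈ i, ∀ ψ : ℝ → ℝ, ContDiff ℝ (⊤ : ℕ∞) ψ → vfBr ψ φ ∈ i) →
      ζ ∈ i → (¬ ∃ c : ℝ, ∀ x : ℝ, ζ x = c) →
      (∀ j : ℕ, derSeries i j ≠ ⊥) ∧ ¬ ∃ j : ℕ, derSeries i j = ⊥) := by
  have hdζ : Differentiable ℝ ζ := hζ.differentiable (by simp)
  have hdζ' : Differentiable ℝ (deriv ζ) :=
    (contDiff_infty_iff_deriv.mp (hζ.of_le (by simp))).2.differentiable (by norm_num)
  have hu : Differentiable ℝ (fun x => ζ x * deriv ζ x) := hdζ.mul hdζ'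
  -- The closed formula for R j k (up to the value of the exponent)
  have key : ∀ j : ℕ, ∃ c : ℕ, ∀ k : ℕ, 1 ≤ k →
      R j k = fun x => ζ x ^ k * (ζ x * deriv ζ x) ^ (c + 1) := by
    intro j
    induction j with
    | zero =>
      refine ⟨0, fun k hk => ?_⟩
      have hk0 : (k : ℝ) ≠ 0 := Nat.cast_ne_zero.2 (by omega)
      funext x
      simp only [hR0, vfBr]
      rw [deriv_fun_pow (hdζ x) (k + 1)]
      simp only [Nat.add_sub_cancel]
      push_cast
      field_simp
      ring
    | succ j ih =>
      obtain ⟨c, hc⟩ := ih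
      refine ⟨2 * c + 2, fun k hk => ?_⟩
      have hk0 : (k : ℝ) ≠ 0 := Nat.cast_ne_zero.2 (by omega)
      funext x
      simp only [hRs, hc 1 le_rfl, hc (k + 1) (by omega), vfBr]
      have hd : ∀ m : ℕ, deriv (fun x => ζ x ^ m * (ζ x * deriv ζ x) ^ (c + 1)) x
          = ((m : ℝ) * ζ x ^ (m - 1) * deriv ζ x) * (ζ x * deriv ζ x) ^ (c + 1)
            + ζ x ^ m * (((c : ℝ) + 1) * (ζ x * deriv ζ x) ^ c
              * deriv (fun x => ζ x * deriv ζ x) x) := by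
        intro m
        rw [deriv_fun_mul ((hdζ x).fun_pow m) ((hu x).fun_pow (c + 1)),
          deriv_fun_pow (hdζ x) m, deriv_fun_pow (hu x) (c + 1)]
        push_cast
        simp
      simp only [hd]
      simp only [Nat.add_sub_cancel]
      push_cast
      field_simp
      ring
  -- first statement
  have part1 : (∃ x : ℝ, ζ x * deriv ζ x ≠ 0) → ∀ j k : ℕ, 1 ≤ k → R j k ≠ 0 := by
    rintro ⟨x, hx⟩ j k hk h0
    obtain ⟨c, hc⟩ := key j
    have hzx : ζ x ≠ 0 := left_ne_zero_of_mul hx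
    rw [hc k hk] at h0
    have h := congrFun h0 x
    simp only [Pi.zero_apply] at h
    exact mul_ne_zero (pow_ne_zero _ hzx) (pow_ne_zero _ hx) h
  refine ⟨part1, fun i hi hζi hnc => ?_⟩
  -- nonconstant smooth ζ has a point where ζ ζ' ≠ 0
  have hex : ∃ x : ℝ, ζ x * deriv ζ x ≠ 0 := by
    have h1 : ∃ x₀, deriv ζ x₀ ≠ 0 := by
      by_contra h
      push_neg at h
      exact hnc ⟨ζ 0, fun x => is_const_of_deriv_eq_zero hdζ h x 0⟩
    obtain ⟨x₀, hx₀⟩ := h1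
    have hopen : IsOpen {y : ℝ | deriv ζ y ≠ 0} :=
      isOpen_compl_singleton.preimage hdζ'.continuous
    obtain ⟨δ, hδ, hball⟩ := Metric.isOpen_iff.mp hopen x₀ hx₀
    by_cases hz : ζ x₀ = 0
    · set x₁ := x₀ + δ / 2 with hx₁def
      have hlt : x₀ < x₁ := by simp [hx₁def]; linarith
      have hmem : ∀ y ∈ Set.Icc x₀ x₁, deriv ζ y ≠ 0 := by
        intro y hy
        apply hball
        rw [Metric.mem_ball, Real.dist_eq, abs_lt]
        constructor <;> [linarith [hy.1]; linarith [hy.2, hx₁def ▸ hy.2]]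
      have hz1 : ζ x₁ ≠ 0 := by
        intro h
        obtain ⟨ξ, hξ, hξ0⟩ := exists_deriv_eq_zero hlt hdζ.continuous.continuousOn
          (by rw [hz, h])
        exact hmem ξ ⟨le_of_lt hξ.1, le_of_lt hξ.2⟩ hξ0
      exact ⟨x₁, mul_ne_zero hz1 (hmem x₁ ⟨le_of_lt hlt, le_rfl⟩)⟩
    · exact ⟨x₀, mul_ne_zero hz hx₀⟩
  have hne := part1 hex
  -- R j k belongs to the j-th derived series of i
  have mem : ∀ j k : ℕ, 1 ≤ k → R j k ∈ derSeries i j := by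
    intro j
    induction j with
    | zero =>
      intro k hk
      have heq : R 0 k = (-(k : ℝ)⁻¹) • vfBr (fun y => ζ y ^ (k + 1)) ζ := by
        funext x
        simp only [hR0, vfBr, Pi.smul_apply, smul_eq_mul]
        ring
      show R 0 k ∈ i
      rw [heq]
      exact Submodule.smul_mem _ _ (hi ζ hζi _ (hζ.pow _))
    | succ j ih =>
      intro k hk
      have heq : R (j + 1) k = (k : ℝ)⁻¹ • vfBr (R j 1) (R j (k + 1)) := by
        funext x
        simp only [hRs, Pi.smul_apply, smul_eq_mul]
      show R (j + 1) k ∈ Submodule.span ℝ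
        {v | ∃ x ∈ derSeries i j, ∃ y ∈ derSeries i j, v = vfBr x y}
      rw [heq]
      exact Submodule.smul_mem _ _ (Submodule.subset_span
        ⟨R j 1, ih 1 le_rfl, R j (k + 1), ih (k + 1) (by omega), rfl⟩)
  have hbot : ∀ j : ℕ, derSeries i j ≠ ⊥ := by
    intro j h
    have hm := mem j 1 le_rfl
    rw [h, Submodule.mem_bot] at hm
    exact hne j 1 le_rfl hm
  exact ⟨hbot, fun ⟨j, hj⟩ => hbot j hj⟩
end
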